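/- arXiv:2011.03205 — 5 statements merged into one kernel-verified Lean document; each statement's English description precedes it below -/
import Mathlib

section
/- Let M be a matrix with rows indexed by a set X and columns indexed by a set Y, over any field. For subsets X1, X2 of X and Y1, Y2 of Y, rank(M[X1,Y1]) + rank(M[X2,Y2]) >= rank(M[X1∩X2, Y1∪Y2]) + rank(M[X1∪X2, Y1∩Y2]). -/
/-!
Let `R_A` be the span of the rows of `M` indexed by `A` and `W_B` the space of vectors vanishing
on `B`, so that `rank M[A,B] = dim (R_A + W_B) - dim W_B`. Since `W_{B₁ ∪ B₂} = W_{B₁} ∩ W_{B₂}`,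
`W_{B₁ ∩ B₂} = W_{B₁} + W_{B₂}`, `R_{A₁ ∪ A₂} = R_{A₁} + R_{A₂}` and
`R_{A₁ ∩ A₂} ⊆ R_{A₁} ∩ R_{A₂}`, the inequality follows from the modular law
`dim (U + U') + dim (U ∩ U') = dim U + dim U'` for the pairs `(W_{B₁}, W_{B₂})` and
`(R_{A₁} + W_{B₁}, R_{A₂} + W_{B₂})`.
-/

open Module Submodule

section Finrank

variable {K V : Type*} [DivisionRing K] [AddCommGroup V] [Module K V] [FiniteDimensional K V]

theorem finrank_map_add_finrank_ker {W : Type*} [AddCommGroup W] [Module K W]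
    (f : V →ₗ[K] W) (p : Submodule K V) :
    finrank K (p.map f) + finrank K (LinearMap.ker f) = finrank K ↥(p ⊔ LinearMap.ker f) := by
  have h := (f.domRestrict (p ⊔ LinearMap.ker f)).finrank_range_add_finrank_ker
  rwa [LinearMap.range_domRestrict, Submodule.map_sup, LinearMap.le_ker_iff_map.mp le_rfl,
    sup_bot_eq, LinearMap.ker_domRestrict, (comapSubtypeEquivOfLe le_sup_right).finrank_eq] at h

theorem finrank_map_add_finrank_map_le {W₁ W₂ W₃ W₄ : Type*}
    [AddCommGroup W₁] [Module K W₁] [AddCommGroup W₂] [Module K W₂]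
    [AddCommGroup W₃] [Module K W₃] [AddCommGroup W₄] [Module K W₄]
    {f₁ : V →ₗ[K] W₁} {f₂ : V →ₗ[K] W₂} {g : V →ₗ[K] W₃} {h : V →ₗ[K] W₄}
    (hg : LinearMap.ker g = LinearMap.ker f₁ ⊓ LinearMap.ker f₂)
    (hh : LinearMap.ker h = LinearMap.ker f₁ ⊔ LinearMap.ker f₂)
    {p₁ p₂ q : Submodule K V} (hq : q ≤ p₁ ⊓ p₂) :
    finrank K (q.map g) + finrank K ((p₁ ⊔ p₂).map h) ≤
      finrank K (p₁.map f₁) + finrank K (p₂.map f₂) := by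
  have e₁ := finrank_map_add_finrank_ker f₁ p₁
  have e₂ := finrank_map_add_finrank_ker f₂ p₂
  have e₃ := finrank_map_add_finrank_ker g q
  have e₄ := finrank_map_add_finrank_ker h (p₁ ⊔ p₂)
  rw [hg] at e₃
  rw [hh, sup_sup_sup_comm] at e₄
  have modular_ker := finrank_sup_add_finrank_inf_eq (LinearMap.ker f₁) (LinearMap.ker f₂)
  have modular_sup :=
    finrank_sup_add_finrank_inf_eq (p₁ ⊔ LinearMap.ker f₁) (p₂ ⊔ LinearMap.ker f₂)
  have mono : finrank K ↥(q ⊔ LinearMap.ker f₁ ⊓ LinearMap.ker f₂) ≤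
      finrank K ↥((p₁ ⊔ LinearMap.ker f₁) ⊓ (p₂ ⊔ LinearMap.ker f₂)) :=
    finrank_mono <| sup_le (hq.trans (inf_le_inf le_sup_left le_sup_left))
      (inf_le_inf le_sup_right le_sup_right)
  omega

end Finrank

section Pi

variable {ι R : Type*} {φ : ι → Type*} [Semiring R] [∀ i, AddCommMonoid (φ i)]
  [∀ i, Module R (φ i)]

theorem Submodule.union_pi (s t : Set ι) (p : (i : ι) → Submodule R (φ i)) :
    pi (s ∪ t) p = pi s p ⊓ pi t p := by
  ext
  simp [or_imp, forall_and]

theorem Submodule.inter_pi (s t : Set ι) (p : (i : ι) → Submodule R (φ i)) :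
    pi (s ∩ t) p = pi s p ⊔ pi t p := by
  classical
  refine le_antisymm (fun x hx => ?_) (sup_le (fun x hx i hi => hx i hi.1)
    (fun x hx i hi => hx i hi.2))
  refine mem_sup.mpr ⟨s.piecewise 0 x, fun i hi => ?_, s.piecewise x 0, fun i hi => ?_, ?_⟩
  · simp [hi]
  · by_cases his : i ∈ s
    · simpa [his] using hx i ⟨his, hi⟩
    · simp [his]
  · ext i
    by_cases his : i ∈ s <;> simp [his]

end Pi

theorem LinearMap.ker_funLeft {R M m n : Type*} [Semiring R] [AddCommMonoid M] [Module R M]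
    (f : m → n) : LinearMap.ker (funLeft R M f) = Submodule.pi (Set.range f) fun _ => ⊥ := by
  ext
  simp [funext_iff, funLeft]

theorem Matrix.rank_submatrix_eq_finrank_map_span {K m n m' n' : Type*} [Field K] [Finite m']
    [Fintype n'] (M : Matrix m n K) (r : m' → m) (c : n' → n) :
    (M.submatrix r c).rank =
      finrank K ((span K (M.row '' Set.range r)).map (LinearMap.funLeft K K c)) := by
  rw [rank_eq_finrank_span_row, Submodule.map_span, ← Set.range_comp, ← Set.range_comp]
  rfl

theorem rank_submatrix_submodular_general {K X Y : Type} [Field K]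
    [Fintype Y] [DecidableEq X] [DecidableEq Y]
    (M : Matrix X Y K) (X1 X2 : Finset X) (Y1 Y2 : Finset Y) :
    (M.submatrix (fun i : ↥(X1 ∩ X2) => i.1) (fun j : ↥(Y1 ∪ Y2) => j.1)).rank +
      (M.submatrix (fun i : ↥(X1 ∪ X2) => i.1) (fun j : ↥(Y1 ∩ Y2) => j.1)).rank ≤
    (M.submatrix (fun i : ↥X1 => i.1) (fun j : ↥Y1 => j.1)).rank +
      (M.submatrix (fun i : ↥X2 => i.1) (fun j : ↥Y2 => j.1)).rank := by
  have range_val {α : Type} (A : Finset α) : Set.range (fun i : ↥A => i.1) = ↑A :=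
    Subtype.range_coe_subtype
  have rank_eq (A : Finset X) (B : Finset Y) :
      (M.submatrix (fun i : ↥A => i.1) (fun j : ↥B => j.1)).rank =
        finrank K ((span K (M.row '' ↑A)).map (LinearMap.funLeft K K (fun j : ↥B => j.1))) := by
    rw [Matrix.rank_submatrix_eq_finrank_map_span, range_val]
  have ker_eq (B : Finset Y) : LinearMap.ker (LinearMap.funLeft K K (fun j : ↥B => j.1)) =
      Submodule.pi ↑B fun _ => ⊥ := by
    rw [LinearMap.ker_funLeft, range_val]
  rw [rank_eq, rank_eq, rank_eq, rank_eq, Finset.coe_union, Set.image_union, span_union]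
  apply finrank_map_add_finrank_map_le
  · rw [ker_eq, ker_eq, ker_eq, Finset.coe_union, Submodule.union_pi]
  · rw [ker_eq, ker_eq, ker_eq, Finset.coe_inter, Submodule.inter_pi]
  · rw [Finset.coe_inter]
    exact le_inf (span_mono (Set.image_mono Set.inter_subset_left))
      (span_mono (Set.image_mono Set.inter_subset_right))

/-- Submodularity of matrix rank for submatrices:
`rank M[X1,Y1] + rank M[X2,Y2] ≥ rank M[X1∩X2, Y1∪Y2] + rank M[X1∪X2, Y1∩Y2]`. -/
theorem rank_submatrix_submodular {K X Y : Type} [Field K]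
    [Fintype X] [Fintype Y] [DecidableEq X] [DecidableEq Y]
    (M : Matrix X Y K) (X1 X2 : Finset X) (Y1 Y2 : Finset Y) :
    (M.submatrix (fun i : ↥(X1 ∩ X2) => i.1) (fun j : ↥(Y1 ∪ Y2) => j.1)).rank +
      (M.submatrix (fun i : ↥(X1 ∪ X2) => i.1) (fun j : ↥(Y1 ∩ Y2) => j.1)).rank ≤
    (M.submatrix (fun i : ↥X1 => i.1) (fun j : ↥Y1 => j.1)).rank +
      (M.submatrix (fun i : ↥X2 => i.1) (fun j : ↥Y2 => j.1)).rank :=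
  rank_submatrix_submodular_general M X1 X2 Y1 Y2
end

section
/- Let G be a graph with vertices a ≠ b, and let A ⊆ V(G)−{a}, B ⊆ V(G)−{b}. If b ∉ A and a ∉ B, then ρ_{G∖a∖b}(A∪B) + ρ_G(A∩B) ≤ ρ_{G∖a}(A) + ρ_{G∖b}(B). -/
open Finset

variable {V : Type} [Fintype V] [DecidableEq V]

open scoped Classical

/-- The rank over GF(2) of the `X × Y` submatrix of the adjacency matrix of `G`. -/
noncomputable def cutRankOn (G : SimpleGraph V) (X Y : Finset V) : ℕ :=
  (Matrix.of (fun (i : ↥X) (j : ↥Y) => if G.Adj i.1 j.1 then (1 : ZMod 2) else 0)).rank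

/-- The cut-rank of `X` in the graph `G` restricted to the vertex set `S`:
the rank over GF(2) of the `X × (S \ X)` submatrix of the adjacency matrix. -/
noncomputable def cutRank (G : SimpleGraph V) (S X : Finset V) : ℕ :=
  cutRankOn G X (S \ X)

/-- `A` gives a split of the graph `G` restricted to the vertex set `S`. -/
def IsSplit (G : SimpleGraph V) (S A : Finset V) : Prop :=
  A ⊆ S ∧ cutRank G S A ≤ 1 ∧ 2 ≤ A.card ∧ 2 ≤ (S \ A).card

/-- The graph `G` restricted to the vertex set `S` is prime: connected and with no split. -/
def IsPrime (G : SimpleGraph V) (S : Finset V) : Prop :=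
  (G.induce (↑S : Set V)).Connected ∧ ∀ A, ¬ IsSplit G S A

/-- `G` restricted to `S` is `k⁺ˡ`-rank-connected. -/
def RankConn (G : SimpleGraph V) (S : Finset V) (k l : ℤ) : Prop :=
  ∀ X ⊆ S, (cutRank G S X : ℤ) < k →
    min (X.card : ℤ) (((S \ X).card : ℤ)) < k + l

/-- `G` restricted to `S` is `k`-rank-connected. -/
def RankConnAll (G : SimpleGraph V) (S : Finset V) (k : ℤ) : Prop :=
  ∀ m : ℤ, m ≤ k → RankConn G S m 0

def SideA (G : SimpleGraph V) (v w x : V) : Prop := G.Adj v x ∧ ¬ G.Adj w x ∧ x ≠ w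
def SideB (G : SimpleGraph V) (v w x : V) : Prop := G.Adj w x ∧ ¬ G.Adj v x ∧ x ≠ v
def SideC (G : SimpleGraph V) (v w x : V) : Prop := G.Adj v x ∧ G.Adj w x

/-- `x` and `y` lie in different ones among the three sets
`N(v)−N(w)−{w}`, `N(w)−N(v)−{v}`, `N(v)∩N(w)`. -/
def PivotToggle (G : SimpleGraph V) (v w x y : V) : Prop :=
  (SideA G v w x ∧ SideB G v w y) ∨ (SideB G v w x ∧ SideA G v w y) ∨
  (SideA G v w x ∧ SideC G v w y) ∨ (SideC G v w x ∧ SideA G v w y) ∨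
  (SideB G v w x ∧ SideC G v w y) ∨ (SideC G v w x ∧ SideB G v w y)

set_option linter.unusedSectionVars false in
lemma pivotToggle_symm {G : SimpleGraph V} {v w x y : V}
    (h : PivotToggle G v w x y) : PivotToggle G v w y x := by
  unfold PivotToggle at h ⊢; tauto

/-- The graph `G ∧ vw` obtained by pivoting the edge `vw`: toggle adjacency across the
three sets and swap the labels of `v` and `w`. -/
def pivot (G : SimpleGraph V) (v w : V) : SimpleGraph V where
  Adj a b := a ≠ b ∧
    Xor' (G.Adj (Equiv.swap v w a) (Equiv.swap v w b))
         (PivotToggle G v w (Equiv.swap v w a) (Equiv.swap v w b))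
  symm := by
    constructor
    intro a b h
    obtain ⟨hne, hx⟩ := h
    refine ⟨hne.symm, ?_⟩
    have hA : G.Adj (Equiv.swap v w b) (Equiv.swap v w a) ↔
        G.Adj (Equiv.swap v w a) (Equiv.swap v w b) := SimpleGraph.adj_comm _ _ _
    have hT : PivotToggle G v w (Equiv.swap v w b) (Equiv.swap v w a) ↔
        PivotToggle G v w (Equiv.swap v w a) (Equiv.swap v w b) :=
      ⟨pivotToggle_symm, pivotToggle_symm⟩
    rw [hA, hT]
    exact hx
  loopless := by constructor; intro a h; exact h.1 rfl

/-- One pivot step along an edge. -/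
def PivotStep (G H : SimpleGraph V) : Prop := ∃ v w, G.Adj v w ∧ H = pivot G v w

/-- Pivot-equivalence: a sequence of pivots. -/
def PivotEquiv : SimpleGraph V → SimpleGraph V → Prop := Relation.ReflTransGen PivotStep

/-- `A` is a fully closed set of `G` restricted to `S`. -/
def FullyClosed (G : SimpleGraph V) (S A : Finset V) : Prop :=
  A ⊆ S ∧ cutRank G S A = 2 ∧ 2 < A.card ∧
    ∀ u ∈ S, u ∉ A → cutRank G S A < cutRank G S (insert u A)

/-- `{a,b,c}` is a triplet of `G` (on vertex set `univ`). -/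
def Triplet (G : SimpleGraph V) (a b c : V) : Prop :=
  cutRank G Finset.univ {a, b, c} = 2 ∧
  ∀ x ∈ ({a, b, c} : Finset V),
    cutRank G (Finset.univ \ {x}) (({a, b, c} : Finset V) \ {x}) = 2

/-- `B` is a `k`-branched set of `G` restricted to `S`. -/
inductive KBranched (G : SimpleGraph V) (S : Finset V) (k : ℕ) : Finset V → Prop
  | single (v : V) (hv : v ∈ S) (h : cutRank G S {v} ≤ k) : KBranched G S k {v}
  | split (B B' : Finset V) (hB : B ⊆ S) (h : cutRank G S B ≤ k)
      (h1 : B' ⊆ B) (h2 : B'.Nonempty) (h3 : B' ≠ B)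
      (hb1 : KBranched G S k B') (hb2 : KBranched G S k (B \ B')) : KBranched G S k B

/-- The rank-width of `G` restricted to `S`: the least `k` such that `S` is `k`-branched
(equivalently, the minimum width of a rank-decomposition). -/
noncomputable def rankWidth (G : SimpleGraph V) (S : Finset V) : ℕ :=
  sInf {k | S = ∅ ∨ KBranched G S k S}

/-- `A` is a titanic set of `G` restricted to `S`. -/
def Titanic (G : SimpleGraph V) (S A : Finset V) : Prop :=
  ∀ A1 A2 A3 : Finset V, A1 ∪ A2 ∪ A3 = A →
    Disjoint A1 A2 → Disjoint A1 A3 → Disjoint A2 A3 →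
    cutRank G S A ≤ cutRank G S A1 ∨ cutRank G S A ≤ cutRank G S A2 ∨
      cutRank G S A ≤ cutRank G S A3

/-!
`cutRankOn G X Y` is the rank of the submatrix `M[X, Y]` of the adjacency matrix over GF(2), and
submatrix ranks are submodular:
`rank M[X₁ ∪ X₂, Y₁ ∩ Y₂] + rank M[X₁ ∩ X₂, Y₁ ∪ Y₂] ≤ rank M[X₁, Y₁] + rank M[X₂, Y₂]`.
Indeed `rank M[X, Y] = dim U - dim (U ∩ ker πY)` for the row span `U` of `X` and the coordinate
projection `πY`, and the modular law `dim (P + Q) + dim (P ∩ Q) = dim P + dim Q` applies both to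
the row spans and to their intersections with the kernels.
The theorem is the case `X₁ = A`, `Y₁ = V - a - A`, `X₂ = B`, `Y₂ = V - b - B`, where
`Y₁ ∩ Y₂ = V - a - b - (A ∪ B)` and, because `a ∉ B`, `b ∉ A` and `a ≠ b`, `Y₁ ∪ Y₂ = V - (A ∩ B)`.
-/

open Module

namespace Submodule

variable {K E F₁ F₂ F₃ F₄ : Type*} [DivisionRing K] [AddCommGroup E] [Module K E]
  [AddCommGroup F₁] [Module K F₁] [AddCommGroup F₂] [Module K F₂]
  [AddCommGroup F₃] [Module K F₃] [AddCommGroup F₄] [Module K F₄]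

theorem finrank_map_add_finrank_inf_ker (f : E →ₗ[K] F₁) (U : Submodule K E)
    [FiniteDimensional K U] :
    finrank K (U.map f) + finrank K ↥(U ⊓ LinearMap.ker f) = finrank K U := by
  have h := LinearMap.finrank_range_add_finrank_ker (f.domRestrict U)
  have hker : comap U.subtype (LinearMap.ker f) = comap U.subtype (U ⊓ LinearMap.ker f) := by
    ext; simp
  rwa [LinearMap.range_domRestrict, LinearMap.ker_domRestrict, hker,
    (comapSubtypeEquivOfLe (inf_le_left : U ⊓ LinearMap.ker f ≤ U)).finrank_eq] at h

theorem finrank_map_sup_add_finrank_map_inf_le [FiniteDimensional K E] {f₁ : E →ₗ[K] F₁}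
    {f₂ : E →ₗ[K] F₂} {f : E →ₗ[K] F₃} {g : E →ₗ[K] F₄}
    (hf : LinearMap.ker f₁ ⊔ LinearMap.ker f₂ ≤ LinearMap.ker f)
    (hg : LinearMap.ker f₁ ⊓ LinearMap.ker f₂ ≤ LinearMap.ker g) (U₁ U₂ : Submodule K E) :
    finrank K ((U₁ ⊔ U₂).map f) + finrank K ((U₁ ⊓ U₂).map g) ≤
      finrank K (U₁.map f₁) + finrank K (U₂.map f₂) := by
  have hsup : U₁ ⊓ LinearMap.ker f₁ ⊔ U₂ ⊓ LinearMap.ker f₂ ≤ (U₁ ⊔ U₂) ⊓ LinearMap.ker f :=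
    le_inf (sup_le_sup inf_le_left inf_le_left) ((sup_le_sup inf_le_right inf_le_right).trans hf)
  have hinf : U₁ ⊓ LinearMap.ker f₁ ⊓ (U₂ ⊓ LinearMap.ker f₂) ≤ U₁ ⊓ U₂ ⊓ LinearMap.ker g :=
    le_inf (inf_le_inf inf_le_left inf_le_left) ((inf_le_inf inf_le_right inf_le_right).trans hg)
  have := finrank_mono hsup
  have := finrank_mono hinf
  have := finrank_sup_add_finrank_inf_eq U₁ U₂
  have := finrank_sup_add_finrank_inf_eq (U₁ ⊓ LinearMap.ker f₁) (U₂ ⊓ LinearMap.ker f₂)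
  have := finrank_map_add_finrank_inf_ker f₁ U₁
  have := finrank_map_add_finrank_inf_ker f₂ U₂
  have := finrank_map_add_finrank_inf_ker f (U₁ ⊔ U₂)
  have := finrank_map_add_finrank_inf_ker g (U₁ ⊓ U₂)
  omega

end Submodule

namespace Finset

variable {n : Type*} (K : Type*) [Field K]

abbrev restrictₗ (Y : Finset n) : (n → K) →ₗ[K] (↥Y → K) :=
  LinearMap.funLeft K K ((↑) : ↥Y → n)

variable {K}

theorem mem_ker_restrictₗ {Y : Finset n} {v : n → K} :
    v ∈ LinearMap.ker (restrictₗ K Y) ↔ ∀ j ∈ Y, v j = 0 := by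
  simp [funext_iff]

theorem ker_restrictₗ_anti {Y Y' : Finset n} (h : Y ⊆ Y') :
    LinearMap.ker (restrictₗ K Y') ≤ LinearMap.ker (restrictₗ K Y) := by
  intro v hv
  rw [mem_ker_restrictₗ] at hv ⊢
  exact fun j hj => hv j (h hj)

theorem ker_restrictₗ_union [DecidableEq n] (Y₁ Y₂ : Finset n) :
    LinearMap.ker (restrictₗ K (Y₁ ∪ Y₂)) =
      LinearMap.ker (restrictₗ K Y₁) ⊓ LinearMap.ker (restrictₗ K Y₂) := by
  ext v
  simp only [Submodule.mem_inf, mem_ker_restrictₗ, mem_union]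
  grind

end Finset

namespace Matrix

variable {K m n : Type*} [Field K]

theorem rank_submatrix_eq_finrank_map_span_s1 [Fintype n] (M : Matrix m n K) (X : Finset m)
    (Y : Finset n) :
    (M.submatrix ((↑) : ↥X → m) ((↑) : ↥Y → n)).rank =
      finrank K ((Submodule.span K (M.row '' X)).map (Y.restrictₗ K)) := by
  have hrow : (M.submatrix ((↑) : ↥X → m) ((↑) : ↥Y → n)).row =
      Y.restrictₗ K ∘ M.row ∘ ((↑) : ↥X → m) := rfl
  have hspan : Submodule.span K (Set.range (M.submatrix ((↑) : ↥X → m) ((↑) : ↥Y → n)).row) =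
      (Submodule.span K (M.row '' X)).map (Y.restrictₗ K) := by
    rw [Submodule.map_span, hrow, Set.range_comp, Set.range_comp, Subtype.range_coe]
  rw [rank_eq_finrank_span_row, hspan]

theorem rank_submatrix_union_inter_add_le [DecidableEq m] [DecidableEq n] [Fintype n]
    (M : Matrix m n K) (X₁ X₂ : Finset m) (Y₁ Y₂ : Finset n) :
    (M.submatrix ((↑) : ↥(X₁ ∪ X₂) → m) ((↑) : ↥(Y₁ ∩ Y₂) → n)).rank +
        (M.submatrix ((↑) : ↥(X₁ ∩ X₂) → m) ((↑) : ↥(Y₁ ∪ Y₂) → n)).rank ≤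
      (M.submatrix ((↑) : ↥X₁ → m) ((↑) : ↥Y₁ → n)).rank +
        (M.submatrix ((↑) : ↥X₂ → m) ((↑) : ↥Y₂ → n)).rank := by
  rw [rank_submatrix_eq_finrank_map_span_s1, rank_submatrix_eq_finrank_map_span_s1,
    rank_submatrix_eq_finrank_map_span_s1, rank_submatrix_eq_finrank_map_span_s1]
  set U₁ := Submodule.span K (M.row '' X₁)
  set U₂ := Submodule.span K (M.row '' X₂)
  have hunion : Submodule.span K (M.row '' ↑(X₁ ∪ X₂)) = U₁ ⊔ U₂ := by
    rw [Finset.coe_union, Set.image_union, Submodule.span_union]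
  have hinter : Submodule.span K (M.row '' ↑(X₁ ∩ X₂)) ≤ U₁ ⊓ U₂ :=
    le_inf (Submodule.span_mono (Set.image_mono (Finset.coe_subset.2 Finset.inter_subset_left)))
      (Submodule.span_mono (Set.image_mono (Finset.coe_subset.2 Finset.inter_subset_right)))
  have hf : LinearMap.ker (Y₁.restrictₗ K) ⊔ LinearMap.ker (Y₂.restrictₗ K) ≤
      LinearMap.ker ((Y₁ ∩ Y₂).restrictₗ K) :=
    sup_le (Finset.ker_restrictₗ_anti Finset.inter_subset_left)
      (Finset.ker_restrictₗ_anti Finset.inter_subset_right)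
  have key := Submodule.finrank_map_sup_add_finrank_map_inf_le hf
    (Finset.ker_restrictₗ_union Y₁ Y₂).ge U₁ U₂
  have mono := Submodule.finrank_mono (Submodule.map_mono (f := (Y₁ ∪ Y₂).restrictₗ K) hinter)
  rw [hunion]
  omega

end Matrix

theorem cutRank_del_del_union_general {G : SimpleGraph V} {a b : V} (hab : a ≠ b)
    {A B : Finset V} (hbA : b ∉ A) (haB : a ∉ B) :
    cutRank G ((Finset.univ \ {a}) \ {b}) (A ∪ B) + cutRank G Finset.univ (A ∩ B) ≤
      cutRank G (Finset.univ \ {a}) A + cutRank G (Finset.univ \ {b}) B := by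
  have hunion : ((univ \ {a}) \ {b}) \ (A ∪ B) = ((univ \ {a}) \ A) ∩ ((univ \ {b}) \ B) := by
    ext x; simp only [mem_sdiff, mem_union, mem_inter, mem_univ, mem_singleton, true_and]; tauto
  have hinter : univ \ (A ∩ B) = ((univ \ {a}) \ A) ∪ ((univ \ {b}) \ B) := by
    ext x; simp only [mem_sdiff, mem_union, mem_inter, mem_univ, mem_singleton, true_and]
    grind
  rw [cutRank, cutRank, cutRank, cutRank, hunion, hinter]
  exact (G.adjMatrix (ZMod 2)).rank_submatrix_union_inter_add_le A B _ _

theorem cutRank_del_del_union {G : SimpleGraph V} {a b : V} (hab : a ≠ b)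
    {A B : Finset V} (hA : A ⊆ Finset.univ \ {a}) (hB : B ⊆ Finset.univ \ {b})
    (hbA : b ∉ A) (haB : a ∉ B) :
    cutRank G ((Finset.univ \ {a}) \ {b}) (A ∪ B) + cutRank G Finset.univ (A ∩ B) ≤
      cutRank G (Finset.univ \ {a}) A + cutRank G (Finset.univ \ {b}) B :=
  cutRank_del_del_union_general hab hbA haB
end

section
/- Let G be a graph, x a vertex of G, and X, Y ⊆ V(G)−{x}. Then ρ_G(X∩Y) + ρ_{G∖x}(X∪Y) ≤ ρ_{G∖x}(X) + ρ_G(Y). -/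
/-
Write `M` for the adjacency matrix over GF(2), `C₁ = V - x - X` and `C₂ = V - Y`. Since `x ∉ Y`,
the four cut-ranks are the ranks of `M[X ∩ Y, C₁ ∪ C₂]`, `M[X ∪ Y, C₁ ∩ C₂]`, `M[X, C₁]` and
`M[Y, C₂]`, so the inequality is an instance of the submodularity of submatrix ranks. That in turn
follows from the modular law for subspaces: the space of vectors supported on `C` and killed by the
rows `R` has dimension `|C| - rank M[R, C]`, and these spaces for `(R₁, C₁)` and `(R₂, C₂)` have
their sum inside the one for `(R₁ ∩ R₂, C₁ ∪ C₂)` and their meet inside the one for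
`(R₁ ∪ R₂, C₁ ∩ C₂)`.
-/

open Finset

variable {V : Type} [Fintype V] [DecidableEq V]

open scoped Classical

namespace Function.ExtendByZero

variable {n F : Type*} [Semiring F] {C : Finset n}

theorem linearMap_val_apply (z : C → F) (j : C) :
    linearMap F ((↑) : C → n) z j = z j :=
  Subtype.val_injective.extend_apply _ _ _

theorem linearMap_val_apply_of_notMem (z : C → F) {j : n} (hj : j ∉ C) :
    linearMap F ((↑) : C → n) z j = 0 :=
  extend_apply' _ _ _ fun ⟨k, hk⟩ => hj (hk ▸ k.2)

end Function.ExtendByZero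

namespace Matrix

variable {m n F : Type*} [Field F] [Fintype n]

/-- The vectors supported on `C` whose image under `M` vanishes on the rows `R`. -/
def supportedKer (M : Matrix m n F) (R : Finset m) (C : Finset n) : Submodule F (n → F) :=
  (⨅ j ∉ C, LinearMap.ker (LinearMap.proj j)) ⊓
    ⨅ i ∈ R, LinearMap.ker (LinearMap.proj i ∘ₗ M.mulVecLin)

theorem mem_supportedKer {M : Matrix m n F} {R : Finset m} {C : Finset n} {y : n → F} :
    y ∈ M.supportedKer R C ↔ (∀ j ∉ C, y j = 0) ∧ ∀ i ∈ R, (M *ᵥ y) i = 0 := by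
  simp [supportedKer]

theorem supportedKer_anti {M : Matrix m n F} {R R' : Finset m} {C C' : Finset n}
    (hR : R' ⊆ R) (hC : C ⊆ C') : M.supportedKer R C ≤ M.supportedKer R' C' := by
  intro y hy
  rw [mem_supportedKer] at hy ⊢
  exact ⟨fun j hj => hy.1 j fun h => hj (hC h), fun i hi => hy.2 i (hR hi)⟩

theorem supportedKer_inf_le [DecidableEq m] [DecidableEq n] (M : Matrix m n F)
    (R₁ R₂ : Finset m) (C₁ C₂ : Finset n) :
    M.supportedKer R₁ C₁ ⊓ M.supportedKer R₂ C₂ ≤ M.supportedKer (R₁ ∪ R₂) (C₁ ∩ C₂) := by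
  intro y hy
  rw [Submodule.mem_inf, mem_supportedKer, mem_supportedKer] at hy
  rw [mem_supportedKer]
  refine ⟨fun j hj => ?_, fun i hi => ?_⟩
  · by_cases hj₁ : j ∈ C₁
    · exact hy.2.1 j fun hj₂ => hj (mem_inter.2 ⟨hj₁, hj₂⟩)
    · exact hy.1.1 j hj₁
  · rcases mem_union.1 hi with hi | hi
    exacts [hy.1.2 i hi, hy.2.2 i hi]

theorem submatrix_mulVec_of_support_subset (M : Matrix m n F) {R : Finset m} {C : Finset n}
    {y : n → F} (hy : ∀ j ∉ C, y j = 0) (i : R) :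
    (M.submatrix (↑) (↑) *ᵥ fun j : C => y j) i = (M *ᵥ y) i := by
  simp only [mulVec, dotProduct, submatrix_apply]
  rw [sum_coe_sort C fun j => M i j * y j]
  exact sum_subset (subset_univ C) fun j _ hj => by simp [hy j hj]

theorem supportedKer_eq_map (M : Matrix m n F) (R : Finset m) (C : Finset n) :
    M.supportedKer R C = (LinearMap.ker (M.submatrix ((↑) : R → m) ((↑) : C → n)).mulVecLin).map
      (Function.ExtendByZero.linearMap F ((↑) : C → n)) := by
  ext y
  simp only [mem_supportedKer, Submodule.mem_map, LinearMap.mem_ker, mulVecLin_apply]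
  constructor
  · rintro ⟨hsupp, hker⟩
    refine ⟨fun j => y j, funext fun i => ?_, funext fun j => ?_⟩
    · rw [submatrix_mulVec_of_support_subset M hsupp, hker i i.2, Pi.zero_apply]
    · by_cases hj : j ∈ C
      · exact Function.ExtendByZero.linearMap_val_apply _ ⟨j, hj⟩
      · rw [Function.ExtendByZero.linearMap_val_apply_of_notMem _ hj, hsupp j hj]
  · rintro ⟨z, hz, rfl⟩
    have hsupp : ∀ j ∉ C, Function.ExtendByZero.linearMap F ((↑) : C → n) z j = 0 :=
      fun j hj => Function.ExtendByZero.linearMap_val_apply_of_notMem z hj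
    refine ⟨hsupp, fun i hi => ?_⟩
    rw [← submatrix_mulVec_of_support_subset M hsupp ⟨i, hi⟩]
    simp only [Function.ExtendByZero.linearMap_val_apply, hz, Pi.zero_apply]

theorem finrank_supportedKer_add_rank (M : Matrix m n F) (R : Finset m) (C : Finset n) :
    Module.finrank F (M.supportedKer R C) + (M.submatrix ((↑) : R → m) ((↑) : C → n)).rank
      = #C := by
  set A := M.submatrix ((↑) : R → m) ((↑) : C → n)
  have hker :
      Module.finrank F (M.supportedKer R C) = Module.finrank F (LinearMap.ker A.mulVecLin) := by
    rw [supportedKer_eq_map]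
    exact (Submodule.equivMapOfInjective _
      (Function.extend_injective Subtype.val_injective (0 : n → F)) _).finrank_eq.symm
  rw [hker, rank, add_comm, LinearMap.finrank_range_add_finrank_ker, Module.finrank_pi,
    Fintype.card_coe]

theorem rank_submatrix_submodular [DecidableEq m] [DecidableEq n] (M : Matrix m n F)
    (R₁ R₂ : Finset m) (C₁ C₂ : Finset n) :
    (M.submatrix ((↑) : ↥(R₁ ∩ R₂) → m) ((↑) : ↥(C₁ ∪ C₂) → n)).rank
      + (M.submatrix ((↑) : ↥(R₁ ∪ R₂) → m) ((↑) : ↥(C₁ ∩ C₂) → n)).rank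
    ≤ (M.submatrix ((↑) : R₁ → m) ((↑) : C₁ → n)).rank
      + (M.submatrix ((↑) : R₂ → m) ((↑) : C₂ → n)).rank := by
  have h₁ := M.finrank_supportedKer_add_rank R₁ C₁
  have h₂ := M.finrank_supportedKer_add_rank R₂ C₂
  have h_inter_union := M.finrank_supportedKer_add_rank (R₁ ∩ R₂) (C₁ ∪ C₂)
  have h_union_inter := M.finrank_supportedKer_add_rank (R₁ ∪ R₂) (C₁ ∩ C₂)
  have h_sup : Module.finrank F ↥(M.supportedKer R₁ C₁ ⊔ M.supportedKer R₂ C₂)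
      ≤ Module.finrank F (M.supportedKer (R₁ ∩ R₂) (C₁ ∪ C₂)) :=
    Submodule.finrank_mono <| sup_le (supportedKer_anti inter_subset_left subset_union_left)
      (supportedKer_anti inter_subset_right subset_union_right)
  have h_inf : Module.finrank F ↥(M.supportedKer R₁ C₁ ⊓ M.supportedKer R₂ C₂)
      ≤ Module.finrank F (M.supportedKer (R₁ ∪ R₂) (C₁ ∩ C₂)) :=
    Submodule.finrank_mono (M.supportedKer_inf_le R₁ R₂ C₁ C₂)
  have h_modular := Submodule.finrank_sup_add_finrank_inf_eq (M.supportedKer R₁ C₁) (M.supportedKer R₂ C₂)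
  have h_card := card_union_add_card_inter C₁ C₂
  omega

end Matrix

theorem cutRank_del_submod_general {G : SimpleGraph V} {x : V}
    {X Y : Finset V} (hY : Y ⊆ Finset.univ \ {x}) :
    cutRank G Finset.univ (X ∩ Y) + cutRank G (Finset.univ \ {x}) (X ∪ Y) ≤
      cutRank G (Finset.univ \ {x}) X + cutRank G Finset.univ Y := by
  have hxY : x ∉ Y := fun h => by simpa using hY h
  have h_inter : univ \ (X ∩ Y) = ((univ \ {x}) \ X) ∪ (univ \ Y) := by
    ext a
    by_cases hax : a = x
    · simp [hax, hxY]
    · simp only [mem_sdiff, mem_union, mem_inter, mem_univ, mem_singleton, hax]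
      tauto
  have h_union : (univ \ {x}) \ (X ∪ Y) = ((univ \ {x}) \ X) ∩ (univ \ Y) := by
    ext a
    simp only [mem_sdiff, mem_union, mem_inter]
    tauto
  rw [cutRank, cutRank, cutRank, cutRank, h_inter, h_union]
  exact Matrix.rank_submatrix_submodular (G.adjMatrix (ZMod 2)) X Y _ _

theorem cutRank_del_submod {G : SimpleGraph V} {x : V}
    {X Y : Finset V} (hX : X ⊆ Finset.univ \ {x}) (hY : Y ⊆ Finset.univ \ {x}) :
    cutRank G Finset.univ (X ∩ Y) + cutRank G (Finset.univ \ {x}) (X ∪ Y) ≤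
      cutRank G (Finset.univ \ {x}) X + cutRank G Finset.univ Y :=
  cutRank_del_submod_general hY
end

section
/- Let k be a positive integer and let G be a graph with at least 2k vertices that is k^{+0}-rank-connected. Then for every vertex v of G, both G and G∖v are (k−1)^{+0}-rank-connected. -/
open Finset

variable {V : Type} [Fintype V] [DecidableEq V]

open scoped Classical

/-! Adding one vertex to a set raises its cut-rank by at most one. So a set `X` of cut-rank
`< k - 1` with `k - 1` vertices grows, by any vertex `u` outside it, to a set of `k` vertices and
cut-rank `< k`, whose complement must then have fewer than `k` vertices: impossible when
`|V(G)| ≥ 2k`. In `G \ v` one adds `u = v` to either side of a bad cut instead, which bounds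
both sides by `k - 1`, again contradicting `|V(G)| ≥ 2k`. -/

set_option linter.unusedSectionVars false

section CutRank

variable {G : SimpleGraph V}

noncomputable def adjCol (G : SimpleGraph V) (X : Finset V) (y : V) : ↥X → ZMod 2 :=
  fun i => if G.Adj i.1 y then 1 else 0

lemma cutRankOn_eq_finrank_span (X Y : Finset V) :
    cutRankOn G X Y = Module.finrank (ZMod 2) (Submodule.span (ZMod 2) (adjCol G X '' ↑Y)) := by
  rw [cutRankOn, Matrix.rank_eq_finrank_span_cols, Set.image_eq_range]
  rfl

lemma cutRankOn_comm (X Y : Finset V) : cutRankOn G X Y = cutRankOn G Y X := by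
  rw [cutRankOn, cutRankOn, ← Matrix.rank_transpose]
  congr 1
  ext i j
  simp only [Matrix.transpose_apply, Matrix.of_apply, G.adj_comm]

lemma cutRankOn_mono_right (X : Finset V) {Y Y' : Finset V} (h : Y' ⊆ Y) :
    cutRankOn G X Y' ≤ cutRankOn G X Y := by
  rw [cutRankOn_eq_finrank_span, cutRankOn_eq_finrank_span]
  exact Submodule.finrank_mono (Submodule.span_mono (Set.image_mono (mod_cast h)))

lemma cutRankOn_insert_right_le (X Y : Finset V) (u : V) :
    cutRankOn G X (insert u Y) ≤ cutRankOn G X Y + 1 := by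
  rw [cutRankOn_eq_finrank_span, cutRankOn_eq_finrank_span, Finset.coe_insert,
    Set.image_insert_eq, Submodule.span_insert]
  have hu : Module.finrank (ZMod 2) (ZMod 2 ∙ adjCol G X u) ≤ 1 :=
    (finrank_span_le_card _).trans (by simp)
  have := Submodule.finrank_add_le_finrank_add_finrank (ZMod 2 ∙ adjCol G X u)
    (Submodule.span (ZMod 2) (adjCol G X '' ↑Y))
  omega

lemma cutRankOn_insert_left_le (X Y : Finset V) (u : V) :
    cutRankOn G (insert u X) Y ≤ cutRankOn G X Y + 1 := by
  rw [cutRankOn_comm, cutRankOn_comm X]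
  exact cutRankOn_insert_right_le Y X u

lemma cutRank_sdiff {S X : Finset V} (hX : X ⊆ S) : cutRank G S (S \ X) = cutRank G S X := by
  rw [cutRank, cutRank, Finset.sdiff_sdiff_eq_self hX, cutRankOn_comm]

/-- Covers both moving `u` from `S \ X` into `X` (`T = S`) and adding a new vertex `u` to `X` and
to the ambient set (`T = insert u S`): either way the matrix gains one row and loses columns. -/
lemma cutRank_insert_le_of_sdiff_subset {S T X : Finset V} {u : V}
    (h : T \ insert u X ⊆ S \ X) : cutRank G T (insert u X) ≤ cutRank G S X + 1 :=
  (cutRankOn_mono_right _ h).trans (cutRankOn_insert_left_le _ _ _)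

end CutRank

namespace RankConn

variable {G : SimpleGraph V} {S T X : Finset V} {k : ℤ}

lemma card_sdiff_insert_lt (hG : RankConn G T k 0) {u : V} (huT : u ∈ T) (huX : u ∉ X)
    (hXT : X ⊆ T) (hsub : T \ insert u X ⊆ S \ X) (hrank : (cutRank G S X : ℤ) < k - 1)
    (hcard : k - 1 ≤ X.card) : ((T \ insert u X).card : ℤ) < k := by
  have hins := cutRank_insert_le_of_sdiff_subset (G := G) hsub
  have := hG (insert u X) (Finset.insert_subset huT hXT) (by omega)
  rw [Finset.card_insert_of_notMem huX] at this
  omega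

lemma card_ne_of_cutRank_lt (hG : RankConn G S k 0) (hS : 2 * k ≤ S.card) (hXS : X ⊆ S)
    (hrank : (cutRank G S X : ℤ) < k - 1) : (X.card : ℤ) ≠ k - 1 := by
  intro hX
  have hsum := Finset.card_sdiff_add_card_eq_card hXS
  obtain ⟨u, hu⟩ : (S \ X).Nonempty := Finset.card_pos.mp (by omega)
  rw [Finset.mem_sdiff] at hu
  have hlt := hG.card_sdiff_insert_lt hu.1 hu.2 hXS (Finset.sdiff_subset_sdiff le_rfl
    (Finset.subset_insert u X)) hrank hX.ge
  have := Finset.card_sdiff_add_card_eq_card (Finset.insert_subset hu.1 hXS)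
  rw [Finset.card_insert_of_notMem hu.2] at this
  omega

theorem sub_one (hG : RankConn G S k 0) (hS : 2 * k ≤ S.card) : RankConn G S (k - 1) 0 := by
  intro X hXS hrank
  have hsum := Finset.card_sdiff_add_card_eq_card hXS
  have hX := hG.card_ne_of_cutRank_lt hS hXS hrank
  have hSX := hG.card_ne_of_cutRank_lt hS Finset.sdiff_subset
    (by rwa [cutRank_sdiff hXS])
  have := hG X hXS (by omega)
  omega

theorem erase_sub_one (hG : RankConn G T k 0) (hT : 2 * k ≤ T.card) {v : V} (hv : v ∈ T) :
    RankConn G (T.erase v) (k - 1) 0 := by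
  intro X hXS hrank
  have hvX : v ∉ X := fun h => Finset.notMem_erase v T (hXS h)
  have hXT : X ⊆ T := hXS.trans (Finset.erase_subset v T)
  have hsum := Finset.card_sdiff_add_card_eq_card hXS
  have hT' := Finset.card_erase_of_mem hv
  have hcompl (Y : Finset V) : T \ insert v Y = T.erase v \ Y := by
    rw [Finset.sdiff_insert, Finset.erase_sdiff_comm]
  by_contra! hmin
  have hSX := hG.card_sdiff_insert_lt hv hvX hXT (hcompl X).le hrank (by omega)
  have hX := hG.card_sdiff_insert_lt hv (fun h => Finset.notMem_erase v T (Finset.sdiff_subset h))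
    (Finset.sdiff_subset.trans (Finset.erase_subset v T)) (hcompl _).le
    (by rwa [cutRank_sdiff hXS]) (by omega)
  rw [hcompl, Finset.sdiff_sdiff_eq_self hXS] at hX
  rw [hcompl] at hSX
  omega

end RankConn

theorem rankConn_del_general {G : SimpleGraph V} {k : ℤ}
    (hG : RankConn G Finset.univ k 0) (hcard : 2 * k ≤ (Fintype.card V : ℤ)) (v : V) :
    RankConn G Finset.univ (k - 1) 0 ∧ RankConn G (Finset.univ \ {v}) (k - 1) 0 := by
  rw [← Finset.card_univ] at hcard
  rw [Finset.sdiff_singleton_eq_erase]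
  exact ⟨hG.sub_one hcard, hG.erase_sub_one hcard (Finset.mem_univ v)⟩

theorem rankConn_del {G : SimpleGraph V} {k : ℤ} (hk : 0 < k)
    (hG : RankConn G Finset.univ k 0) (hcard : 2 * k ≤ (Fintype.card V : ℤ)) (v : V) :
    RankConn G Finset.univ (k - 1) 0 ∧ RankConn G (Finset.univ \ {v}) (k - 1) 0 :=
  rankConn_del_general hG hcard v
end

section
/- Let G be a graph that is k^{+ℓ}-rank-connected and let v be a vertex of G. Then G∖v or G/v is k^{+(2ℓ+k−1)}-rank-connected. -/
open Finset

variable {V : Type} [Fintype V] [DecidableEq V]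

open scoped Classical

/-
Suppose `X` witnesses that `G ∖ v` is not `k^{+(2ℓ+k-1)}`-rank-connected and `Y` does the same for
`G / v = (G ∧ vw) ∖ v`, with complements `X'`, `Y'` in `V - v`. Submodularity of the rank of
submatrices of the adjacency matrix, applied to the row sets `X`, `Y + v` and the column sets
`X'`, `Y' + v`, together with the fact that the block `(Y + v) × (Y' + v)` of `G` has rank at most
one more than the block `Y × Y'` of `G ∧ vw` (eliminate with the entry at `(v, w)`), gives
`ρ(X ∩ Y) + ρ(X' ∩ Y') ≤ ρ_{G∖v}(X) + ρ_{G/v}(Y) + 1 ≤ 2k - 1`, and likewise for `X ∩ Y'`,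
`X' ∩ Y`. So each of the two diagonal pairs of quadrants contains a quadrant of cut-rank `< k` in
`G`, hence with fewer than `k + ℓ` vertices. Two such quadrants share a side among `X, X', Y, Y'`,
which then has at most `2(k + ℓ - 1)` vertices, a contradiction.
-/

open Module LinearMap

theorem LinearMap.finrank_sup_ker {K E F : Type*} [Field K] [AddCommGroup E] [Module K E]
    [FiniteDimensional K E] [AddCommGroup F] [Module K F] (f : E →ₗ[K] F) (p : Submodule K E) :
    finrank K ↥(p ⊔ ker f) = finrank K (p.map f) + finrank K (ker f) := by
  have h := finrank_range_add_finrank_ker (f.domRestrict (p ⊔ ker f))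
  rwa [range_domRestrict, Submodule.map_sup, le_ker_iff_map.mp le_rfl, sup_bot_eq,
    ker_domRestrict, (Submodule.comapSubtypeEquivOfLe le_sup_right).finrank_eq, eq_comm] at h

namespace Matrix

variable {α β K : Type*} [Field K]

noncomputable def submatrixRank (M : Matrix α β K) (X : Finset α) (Y : Finset β) : ℕ :=
  (M.submatrix ((↑) : X → α) ((↑) : Y → β)).rank

theorem submatrixRank_transpose (M : Matrix α β K) (X : Finset α) (Y : Finset β) :
    Mᵀ.submatrixRank Y X = M.submatrixRank X Y := by
  rw [submatrixRank, submatrixRank, ← transpose_submatrix, rank_transpose]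

theorem IsSymm.submatrixRank_comm {M : Matrix α α K} (hM : M.IsSymm) (X Y : Finset α) :
    M.submatrixRank Y X = M.submatrixRank X Y := by
  rw [← submatrixRank_transpose, hM.eq]

def rowSpan (M : Matrix α β K) (X : Finset α) : Submodule K (β → K) :=
  Submodule.span K (M.row '' X)

theorem rowSpan_union [DecidableEq α] (M : Matrix α β K) (X₁ X₂ : Finset α) :
    M.rowSpan (X₁ ∪ X₂) = M.rowSpan X₁ ⊔ M.rowSpan X₂ := by
  rw [rowSpan, coe_union, Set.image_union, Submodule.span_union]; rfl

theorem rowSpan_mono (M : Matrix α β K) {X X' : Finset α} (h : X ⊆ X') :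
    M.rowSpan X ≤ M.rowSpan X' :=
  Submodule.span_mono (Set.image_mono (coe_subset.mpr h))

theorem finrank_map_rowSpan (M : Matrix α β K) (X : Finset α) (Y : Finset β) :
    finrank K ((M.rowSpan X).map (funLeft K K ((↑) : Y → β))) = M.submatrixRank X Y := by
  rw [submatrixRank, rank_eq_finrank_span_row, rowSpan, Submodule.map_span, Set.image_image,
    Set.image_eq_range]
  rfl

theorem mem_ker_funLeft {Y : Finset β} {f : β → K} :
    f ∈ ker (funLeft K K ((↑) : Y → β)) ↔ ∀ j ∈ Y, f j = 0 := by
  simp [funext_iff, funLeft]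

theorem ker_funLeft_antitone {Y Y' : Finset β} (h : Y ⊆ Y') :
    ker (funLeft K K ((↑) : Y' → β)) ≤ ker (funLeft K K ((↑) : Y → β)) := fun _ hf =>
  mem_ker_funLeft.mpr fun j hj => mem_ker_funLeft.mp hf j (h hj)

theorem ker_funLeft_inter [DecidableEq β] (Y₁ Y₂ : Finset β) :
    ker (funLeft K K ((↑) : ↥(Y₁ ∩ Y₂) → β)) =
      ker (funLeft K K ((↑) : Y₁ → β)) ⊔ ker (funLeft K K ((↑) : Y₂ → β)) := by
  refine le_antisymm (fun f hf => ?_)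
    (sup_le (ker_funLeft_antitone inter_subset_left) (ker_funLeft_antitone inter_subset_right))
  rw [mem_ker_funLeft] at hf
  have hsplit : f = (fun j => if j ∈ Y₁ then 0 else f j) + fun j => if j ∈ Y₁ then f j else 0 := by
    ext j; by_cases hj : j ∈ Y₁ <;> simp [hj]
  rw [hsplit]
  refine Submodule.add_mem_sup (mem_ker_funLeft.mpr fun j hj => by simp [hj])
    (mem_ker_funLeft.mpr fun j hj => ?_)
  by_cases hj₁ : j ∈ Y₁
  · simp [hj₁, hf j (mem_inter.mpr ⟨hj₁, hj⟩)]
  · simp [hj₁]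

theorem finrank_ker_funLeft [Fintype β] [DecidableEq β] (Y : Finset β) :
    finrank K (ker (funLeft K K ((↑) : Y → β))) = #Yᶜ := by
  have h := finrank_range_add_finrank_ker (funLeft K K ((↑) : Y → β))
  rw [range_eq_top.mpr (funLeft_surjective_of_injective _ _ _ Subtype.val_injective),
    finrank_top, finrank_pi, finrank_pi, Fintype.card_coe] at h
  rw [card_compl]
  omega

/-- Submodularity of `submatrixRank` is the modular law for these subspaces. -/
theorem finrank_rowSpan_sup_ker [Fintype β] [DecidableEq β] (M : Matrix α β K) (X : Finset α)
    (Y : Finset β) :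
    finrank K ↥(M.rowSpan X ⊔ ker (funLeft K K ((↑) : Y → β))) = M.submatrixRank X Y + #Yᶜ := by
  rw [finrank_sup_ker, finrank_map_rowSpan, finrank_ker_funLeft]

theorem submatrixRank_submodular [DecidableEq α] [Fintype β] [DecidableEq β] (M : Matrix α β K)
    (X₁ X₂ : Finset α) (Y₁ Y₂ : Finset β) :
    M.submatrixRank (X₁ ∩ X₂) (Y₁ ∪ Y₂) + M.submatrixRank (X₁ ∪ X₂) (Y₁ ∩ Y₂) ≤
      M.submatrixRank X₁ Y₁ + M.submatrixRank X₂ Y₂ := by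
  have hsup : M.rowSpan (X₁ ∪ X₂) ⊔ ker (funLeft K K ((↑) : ↥(Y₁ ∩ Y₂) → β)) =
      (M.rowSpan X₁ ⊔ ker (funLeft K K ((↑) : Y₁ → β))) ⊔
        (M.rowSpan X₂ ⊔ ker (funLeft K K ((↑) : Y₂ → β))) := by
    rw [rowSpan_union, ker_funLeft_inter, sup_sup_sup_comm]
  have hinf : M.rowSpan (X₁ ∩ X₂) ⊔ ker (funLeft K K ((↑) : ↥(Y₁ ∪ Y₂) → β)) ≤
      (M.rowSpan X₁ ⊔ ker (funLeft K K ((↑) : Y₁ → β))) ⊓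
        (M.rowSpan X₂ ⊔ ker (funLeft K K ((↑) : Y₂ → β))) :=
    le_inf (sup_le_sup (M.rowSpan_mono inter_subset_left) (ker_funLeft_antitone subset_union_left))
      (sup_le_sup (M.rowSpan_mono inter_subset_right) (ker_funLeft_antitone subset_union_right))
  have hdim := Submodule.finrank_sup_add_finrank_inf_eq
    (M.rowSpan X₁ ⊔ ker (funLeft K K ((↑) : Y₁ → β)))
    (M.rowSpan X₂ ⊔ ker (funLeft K K ((↑) : Y₂ → β)))
  have hle := Submodule.finrank_mono hinf
  rw [← hsup, finrank_rowSpan_sup_ker, finrank_rowSpan_sup_ker, finrank_rowSpan_sup_ker] at hdim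
  rw [finrank_rowSpan_sup_ker] at hle
  have hcard : #(Y₁ ∪ Y₂)ᶜ + #(Y₁ ∩ Y₂)ᶜ = #Y₁ᶜ + #Y₂ᶜ := by
    rw [compl_union, compl_inter, add_comm, card_union_add_card_inter]
  omega

theorem submatrixRank_le_add_one_of_rows {M N : Matrix α β K} {X X' : Finset α} {Y : Finset β}
    (u : β → K) (h : ∀ i ∈ X, ∃ g ∈ N.rowSpan X', ∃ c : K, ∀ j ∈ Y, M i j = g j + c * u j) :
    M.submatrixRank X Y ≤ N.submatrixRank X' Y + 1 := by
  set r := funLeft K K ((↑) : Y → β)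
  have hle : (M.rowSpan X).map r ≤ (N.rowSpan X').map r ⊔ Submodule.span K {r u} := by
    rw [rowSpan, Submodule.map_span, Submodule.span_le]
    rintro _ ⟨_, ⟨i, hi, rfl⟩, rfl⟩
    obtain ⟨g, hg, c, hgc⟩ := h i hi
    have hrow : r (M.row i) = r g + c • r u := funext fun j => hgc j j.2
    rw [SetLike.mem_coe, hrow]
    exact Submodule.add_mem_sup (Submodule.mem_map_of_mem hg)
      (Submodule.smul_mem _ c (Submodule.mem_span_singleton_self _))
  rw [← finrank_map_rowSpan, ← finrank_map_rowSpan]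
  calc finrank K ((M.rowSpan X).map r)
      ≤ finrank K ↥((N.rowSpan X').map r ⊔ Submodule.span K {r u}) :=
        Submodule.finrank_mono hle
    _ ≤ finrank K ((N.rowSpan X').map r) + finrank K (Submodule.span K {r u}) :=
        Submodule.finrank_add_le_finrank_add_finrank _ _
    _ ≤ finrank K ((N.rowSpan X').map r) + 1 := by
        gcongr
        exact (finrank_span_le_card {r u}).trans (by simp)

theorem submatrixRank_insert_of_forall_eq_zero [DecidableEq β] {M : Matrix α β K} {X : Finset α}
    {Y : Finset β} {v : β} (hv : ∀ i ∈ X, M i v = 0) :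
    M.submatrixRank X (insert v Y) = M.submatrixRank X Y := by
  rw [submatrixRank, submatrixRank, rank_eq_finrank_span_cols, rank_eq_finrank_span_cols]
  suffices h :
      Submodule.span K (Set.range (M.submatrix ((↑) : X → α) ((↑) : ↥(insert v Y) → β)).col) =
        Submodule.span K (Set.range (M.submatrix ((↑) : X → α) ((↑) : Y → β)).col) by rw [h]
  refine le_antisymm (Submodule.span_le.mpr ?_)
    (Submodule.span_mono fun _ ⟨j, hj⟩ => ⟨⟨j, mem_insert_of_mem j.2⟩, hj⟩)
  rintro _ ⟨⟨j, hj⟩, rfl⟩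
  rcases mem_insert.mp hj with rfl | hj
  · have hcol : (M.submatrix ((↑) : X → α) ((↑) : ↥(insert j Y) → β)).col ⟨j, hj⟩ = 0 :=
      funext fun i => hv i i.2
    rw [SetLike.mem_coe, hcol]
    exact zero_mem _
  · exact Submodule.subset_span ⟨⟨j, hj⟩, rfl⟩

theorem submatrixRank_updateCol_of_notMem [DecidableEq β] (M : Matrix α β K) (X : Finset α)
    {Y : Finset β} {v : β} (c : α → K) (hv : v ∉ Y) :
    (M.updateCol v c).submatrixRank X Y = M.submatrixRank X Y := by
  unfold submatrixRank
  congr 1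
  ext i j
  exact updateCol_ne fun h => hv (h ▸ j.2)

theorem submatrixRank_insert_le_of_pivot [DecidableEq α] [CharP K 2] {A H : Matrix α α K}
    (hA : A.IsSymm) {v w : α} {Y₁ Y₂ : Finset α} (hvY₁ : v ∉ Y₁) (hvY₂ : v ∉ Y₂) (hwY₁ : w ∈ Y₁)
    (hwY₂ : w ∉ Y₂) (hvv : A v v = 0) (hvw : A v w = 1)
    (hH : ∀ a b, a ≠ v → a ≠ w → b ≠ v → b ≠ w → H a b = A a b + A v a * A w b + A w a * A v b)
    (hHw : ∀ b, b ≠ v → b ≠ w → H w b = A v b) :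
    A.submatrixRank (insert v Y₁) (insert v Y₂) ≤ H.submatrixRank Y₁ Y₂ + 1 := by
  -- Eliminating with the entry `A v w = 1` writes each row of `A` over `insert v Y₁`, on the
  -- columns `insert v Y₂`, as a combination of the row of `w` and of rows of `H` with column `v`
  -- cleared.
  set H' := H.updateCol v 0
  have hwv : A w v = 1 := (hA.apply v w).trans hvw
  have hH'v : ∀ a, H' a v = 0 := fun a => updateCol_self
  have hH' : ∀ a b, b ∈ Y₂ → H' a b = H a b := fun a b hb => updateCol_ne fun h => hvY₂ (h ▸ hb)
  have hrow : ∀ b ∈ Y₁, H'.row b ∈ H'.rowSpan Y₁ := fun b hb => Submodule.subset_span ⟨b, hb, rfl⟩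
  have hne : ∀ b ∈ Y₂, b ≠ v ∧ b ≠ w := fun b hb => ⟨fun h => hvY₂ (h ▸ hb), fun h => hwY₂ (h ▸ hb)⟩
  calc A.submatrixRank (insert v Y₁) (insert v Y₂) ≤ H'.submatrixRank Y₁ (insert v Y₂) + 1 :=
        submatrixRank_le_add_one_of_rows (A w) fun i hi => ?_
    _ = H.submatrixRank Y₁ Y₂ + 1 := by
        rw [submatrixRank_insert_of_forall_eq_zero fun a _ => hH'v a,
          submatrixRank_updateCol_of_notMem _ _ _ hvY₂]
  rcases mem_insert.mp hi with rfl | hi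
  · refine ⟨H'.row w, hrow w hwY₁, 0, fun j hj => ?_⟩
    rcases mem_insert.mp hj with rfl | hj
    · simp [hvv, hH'v]
    · simp [row, hH' _ _ hj, hHw j (hne j hj).1 (hne j hj).2]
  by_cases hiw : i = w
  · exact ⟨0, zero_mem _, 1, fun j _ => by simp [hiw]⟩
  have hiv : i ≠ v := fun h => hvY₁ (h ▸ hi)
  refine ⟨H'.row i + A w i • H'.row w, add_mem (hrow i hi) (Submodule.smul_mem _ _ (hrow w hwY₁)),
    A v i, fun j hj => ?_⟩
  rcases mem_insert.mp hj with rfl | hj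
  · simp [row, hH'v, hwv, hA.apply i j]
  · obtain ⟨hjv, hjw⟩ := hne j hj
    simp only [row, Pi.add_apply, Pi.smul_apply, smul_eq_mul, hH' _ _ hj, hH i j hiv hiw hjv hjw,
      hHw j hjv hjw]
    linear_combination -(A v i * A w j + A w i * A v j) * CharTwo.two_eq_zero (R := K)

end Matrix

open Matrix

section Graph

variable {G : SimpleGraph V}

omit [Fintype V] [DecidableEq V] in
theorem cutRankOn_eq_submatrixRank (G : SimpleGraph V) (X Y : Finset V) :
    cutRankOn G X Y = (G.adjMatrix (ZMod 2)).submatrixRank X Y := rfl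

theorem pivot_adj {v w a b : V} :
    (pivot G v w).Adj a b ↔ a ≠ b ∧ Xor (G.Adj (Equiv.swap v w a) (Equiv.swap v w b))
      (PivotToggle G v w (Equiv.swap v w a) (Equiv.swap v w b)) := Iff.rfl

theorem adjMatrix_pivot_apply {v w a b : V} (hav : a ≠ v) (haw : a ≠ w) (hbv : b ≠ v)
    (hbw : b ≠ w) :
    (pivot G v w).adjMatrix (ZMod 2) a b = G.adjMatrix (ZMod 2) a b +
      G.adjMatrix (ZMod 2) v a * G.adjMatrix (ZMod 2) w b +
        G.adjMatrix (ZMod 2) w a * G.adjMatrix (ZMod 2) v b := by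
  simp only [SimpleGraph.adjMatrix_apply, pivot_adj, Equiv.swap_apply_of_ne_of_ne hav haw,
    Equiv.swap_apply_of_ne_of_ne hbv hbw, PivotToggle, SideA, SideB, SideC, xor_def]
  by_cases hab : a = b
  · subst hab; split_ifs <;> simp_all; decide
  · split_ifs <;> simp_all <;> decide

theorem pivot_adj_left {v w b : V} (hvw : v ≠ w) (hbv : b ≠ v) (hbw : b ≠ w) :
    (pivot G v w).Adj w b ↔ G.Adj v b := by
  simp [pivot_adj, Equiv.swap_apply_of_ne_of_ne hbv hbw, PivotToggle, SideA, SideB, SideC, xor_def,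
    hbv, hbw, hvw, Ne.symm hbw]

theorem adjMatrix_pivot_apply_left {v w b : V} (hvw : v ≠ w) (hbv : b ≠ v) (hbw : b ≠ w) :
    (pivot G v w).adjMatrix (ZMod 2) w b = G.adjMatrix (ZMod 2) v b := by
  simp only [SimpleGraph.adjMatrix_apply, pivot_adj_left hvw hbv hbw]

omit [Fintype V] in
theorem cutRank_sdiff_self {S Y : Finset V} (hY : Y ⊆ S) :
    cutRank G S (S \ Y) = cutRank G S Y := by
  rw [cutRank, cutRank, Finset.sdiff_sdiff_eq_self hY, cutRankOn_eq_submatrixRank,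
    cutRankOn_eq_submatrixRank, G.isSymm_adjMatrix.submatrixRank_comm]

theorem cutRankOn_insert_le_cutRank_pivot {v w : V} (hvw : G.Adj v w) {Y : Finset V}
    (hY : Y ⊆ univ \ {v}) :
    cutRankOn G (insert v Y) (insert v ((univ \ {v}) \ Y)) ≤
      cutRank (pivot G v w) (univ \ {v}) Y + 1 := by
  have hA := G.isSymm_adjMatrix (α := ZMod 2)
  have hpiv : ∀ Y₁ Y₂ : Finset V, v ∉ Y₁ → v ∉ Y₂ → w ∈ Y₁ → w ∉ Y₂ →
      (G.adjMatrix (ZMod 2)).submatrixRank (insert v Y₁) (insert v Y₂) ≤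
        ((pivot G v w).adjMatrix (ZMod 2)).submatrixRank Y₁ Y₂ + 1 :=
    fun Y₁ Y₂ hvY₁ hvY₂ hwY₁ hwY₂ => submatrixRank_insert_le_of_pivot hA hvY₁ hvY₂ hwY₁ hwY₂
      (by simp) (by simp [hvw]) (fun _ _ => adjMatrix_pivot_apply)
      (fun _ => adjMatrix_pivot_apply_left hvw.ne)
  have hvY : v ∉ Y := fun h => by simpa using hY h
  have hvY' : v ∉ (univ \ {v}) \ Y := by simp
  rw [cutRankOn_eq_submatrixRank, cutRank, cutRankOn_eq_submatrixRank]
  by_cases hw : w ∈ Y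
  · exact hpiv _ _ hvY hvY' hw fun h => (mem_sdiff.mp h).2 hw
  · have hwY : w ∈ (univ \ {v}) \ Y := by simp [hw, hvw.ne.symm]
    rw [← hA.submatrixRank_comm, ← (pivot G v w).isSymm_adjMatrix.submatrixRank_comm]
    exact hpiv _ _ hvY' hvY hwY hw

theorem cutRank_inter_add_cutRank_inter_le {v w : V} (hvw : G.Adj v w) {X Y : Finset V}
    (hX : X ⊆ univ \ {v}) (hY : Y ⊆ univ \ {v}) :
    cutRank G univ (X ∩ Y) + cutRank G univ (((univ \ {v}) \ X) ∩ ((univ \ {v}) \ Y)) ≤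
      cutRank G (univ \ {v}) X + cutRank (pivot G v w) (univ \ {v}) Y + 1 := by
  -- `v` joins both the rows and the columns of the second pair, so that the union and the
  -- intersection of the two pairs are exactly complementary in `univ`.
  have hsub := (G.adjMatrix (ZMod 2)).submatrixRank_submodular X (insert v Y) ((univ \ {v}) \ X)
    (insert v ((univ \ {v}) \ Y))
  have hpiv := cutRankOn_insert_le_cutRank_pivot hvw hY
  have hvX : v ∉ X := fun h => by simpa using hX h
  have e₁ : X ∩ insert v Y = X ∩ Y := inter_insert_of_notMem hvX
  have e₂ : (univ \ {v}) \ X ∪ insert v ((univ \ {v}) \ Y) = univ \ (X ∩ Y) := by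
    ext x; have := @hX x; simp at *; tauto
  have e₃ : X ∪ insert v Y = univ \ (((univ \ {v}) \ X) ∩ ((univ \ {v}) \ Y)) := by
    ext x; have := @hX x; have := @hY x; simp at *; tauto
  have e₄ : ((univ \ {v}) \ X) ∩ insert v ((univ \ {v}) \ Y) =
      ((univ \ {v}) \ X) ∩ ((univ \ {v}) \ Y) :=
    inter_insert_of_notMem (by simp)
  rw [e₁, e₂, e₃, e₄, G.isSymm_adjMatrix.submatrixRank_comm _ (univ \ _)] at hsub
  simp only [cutRank, cutRankOn_eq_submatrixRank] at hpiv ⊢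
  omega

variable {k l : ℤ}

omit [Fintype V] in
theorem exists_of_not_rankConn {S : Finset V} (h : ¬ RankConn G S k l) :
    ∃ X ⊆ S, (cutRank G S X : ℤ) < k ∧ k + l ≤ #X ∧ k + l ≤ #(S \ X) := by
  simpa [RankConn, le_min_iff] using h

theorem RankConn.delete_of_forall_not_adj (hG : RankConn G univ k l) {v : V}
    (hv : ∀ w, ¬ G.Adj v w) : RankConn G (univ \ {v}) k l := by
  intro X hX hρ
  have hvX : v ∉ (univ \ {v}) \ X := by simp
  have hcompl : univ \ X = insert v ((univ \ {v}) \ X) := by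
    ext x; have := @hX x; by_cases hx : x = v <;> simp_all
  have hcut : cutRank G univ X = cutRank G (univ \ {v}) X := by
    rw [cutRank, cutRank, hcompl, cutRankOn_eq_submatrixRank, cutRankOn_eq_submatrixRank,
      submatrixRank_insert_of_forall_eq_zero fun i _ => by simp [G.adj_comm i v, hv]]
  have hmin := hG X (subset_univ X) (hcut ▸ hρ)
  rw [hcompl, card_insert_of_notMem hvX] at hmin
  omega

theorem RankConn.cutRank_quadrants (hG : RankConn G univ k l) {S X Y : Finset V} (hX : X ⊆ S)
    (hY : Y ⊆ S) (hXc : 2 * (k + l) - 1 ≤ #X) (hXc' : 2 * (k + l) - 1 ≤ #(S \ X))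
    (hYc : 2 * (k + l) - 1 ≤ #Y) (hYc' : 2 * (k + l) - 1 ≤ #(S \ Y)) :
    (k ≤ cutRank G univ (X ∩ Y) ∧ k ≤ cutRank G univ ((S \ X) ∩ (S \ Y))) ∨
      (k ≤ cutRank G univ (X ∩ (S \ Y)) ∧ k ≤ cutRank G univ ((S \ X) ∩ Y)) := by
  have small : ∀ {Z B : Finset V}, Disjoint Z B → 2 * (k + l) - 1 ≤ #B →
      (cutRank G univ Z : ℤ) < k → (#Z : ℤ) < k + l := by
    intro Z B hZB hB hρ
    have hmin := hG Z (subset_univ Z) hρ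
    have : #B ≤ #(univ \ Z) := card_le_card fun x hx => by
      simpa using fun hxZ => disjoint_left.mp hZB hxZ hx
    omega
  have split : ∀ {T U : Finset V}, T ⊆ S → #(T ∩ U) + #(T ∩ (S \ U)) = #T := fun hT => by
    rw [← inter_sdiff_assoc, inter_eq_left.mpr hT, card_inter_add_card_sdiff]
  have h₁₁ := small (Z := X ∩ Y) (disjoint_sdiff.mono_left inter_subset_left) hXc'
  have h₁₂ := small (Z := X ∩ (S \ Y)) (disjoint_sdiff.mono_left inter_subset_left) hXc'
  have h₂₁ := small (Z := (S \ X) ∩ Y) (sdiff_disjoint.mono_left inter_subset_left) hXc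
  have h₂₂ := small (Z := (S \ X) ∩ (S \ Y)) (sdiff_disjoint.mono_left inter_subset_left) hXc
  have cX := split (U := Y) hX
  have cX' := split (U := Y) (sdiff_subset : S \ X ⊆ S)
  have cY := split (U := X) hY
  have cY' := split (U := X) (sdiff_subset : S \ Y ⊆ S)
  rw [inter_comm Y, inter_comm Y] at cY
  rw [inter_comm (S \ Y), inter_comm (S \ Y)] at cY'
  omega

end Graph

theorem rankConn_del_or_contract {G : SimpleGraph V} {k l : ℤ}
    (hG : RankConn G Finset.univ k l) (v : V) :
    RankConn G (Finset.univ \ {v}) k (2 * l + k - 1) ∨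
      ∃ w, G.Adj v w ∧ RankConn (pivot G v w) (Finset.univ \ {v}) k (2 * l + k - 1) := by
  by_contra! h
  obtain ⟨hdel, hcon⟩ := h
  obtain ⟨X, hXS, hXρ, hX, hX'⟩ := exists_of_not_rankConn hdel
  obtain ⟨w, hvw⟩ : ∃ w, G.Adj v w := by
    by_contra! hv
    have := hG.delete_of_forall_not_adj hv X hXS hXρ
    omega
  obtain ⟨Y, hYS, hYρ, hY, hY'⟩ := exists_of_not_rankConn (hcon w hvw)
  have h₁ := cutRank_inter_add_cutRank_inter_le hvw hXS hYS
  have h₂ := cutRank_inter_add_cutRank_inter_le hvw hXS (sdiff_subset (s := univ \ {v}) (t := Y))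
  rw [Finset.sdiff_sdiff_eq_self hYS, cutRank_sdiff_self hYS] at h₂
  rcases hG.cutRank_quadrants hXS hYS (by omega) (by omega) (by omega) (by omega) with h | h <;>
    omega
end
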